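/- Let λ_1, …, λ_n be pairwise distinct reals, ρ_k = (-1)^k σ_k(λ), L = diag(λ_1, …, λ_n), and K_r = -diag(∂ρ_r/∂λ_1, …, ∂ρ_r/∂λ_n) for r = 1,…,n. Then K_1 = I and K_r = ∑_{k=0}^{r-1} ρ_k L^{r-1-k} for r = 2, …, n, where ρ_0 = 1. -/

import Mathlib

/-- The `i`-th elementary symmetric polynomial `σ_i(λ₁,…,λ_n)`. -/
noncomputable def esymmF (n i : ℕ) (l : Fin n → ℝ) : ℝ :=
  ∑ s ∈ Finset.powersetCard i Finset.univ, ∏ j ∈ s, l j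

/-- `ρ_i = (-1)^i σ_i(λ)`. -/
noncomputable def rho (n i : ℕ) (l : Fin n → ℝ) : ℝ :=
  (-1) ^ i * esymmF n i l

/-- Partial derivative `∂f/∂λ_j` evaluated at `l`. -/
noncomputable def pd (n : ℕ) (f : (Fin n → ℝ) → ℝ) (l : Fin n → ℝ) (j : Fin n) : ℝ :=
  deriv (fun t => f (Function.update l j t)) (l j)

/-- `Δ_j = ∏_{k≠j} (λ_j - λ_k)`. -/
noncomputable def Delta (n : ℕ) (l : Fin n → ℝ) (j : Fin n) : ℝ :=
  ∏ k ∈ Finset.univ.erase j, (l j - l k)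

open Finset

/-- elementary symmetric sum over a subset -/
noncomputable def Eaux (n : ℕ) (l : Fin n → ℝ) (s : Finset (Fin n)) (k : ℕ) : ℝ :=
  ∑ t ∈ s.powersetCard k, ∏ i ∈ t, l i

lemma esymm_split (n : ℕ) (l : Fin n → ℝ) (j : Fin n) (m : ℕ) (t : ℝ) :
    esymmF n (m + 1) (Function.update l j t)
      = Eaux n l (univ.erase j) (m + 1) + t * Eaux n l (univ.erase j) m := by
  unfold esymmF Eaux
  have hj : (univ : Finset (Fin n)) = insert j (univ.erase j) :=
    (insert_erase (mem_univ j)).symm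
  conv_lhs => rw [hj]
  rw [powersetCard_succ_insert (notMem_erase j _), sum_union, sum_image]
  · congr 1
    · refine sum_congr rfl fun s hs => prod_congr rfl fun i hi => ?_
      have : i ≠ j := by
        rcases mem_powersetCard.1 hs with ⟨hsub, -⟩
        exact ne_of_mem_erase (hsub hi)
      exact Function.update_of_ne this _ _
    · rw [mul_sum]
      refine sum_congr rfl fun s hs => ?_
      rcases mem_powersetCard.1 hs with ⟨hsub, -⟩
      have hjs : j ∉ s := fun h => (notMem_erase j univ) (hsub h)
      rw [prod_insert hjs, Function.update_self]
      congr 1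
      refine prod_congr rfl fun i hi => ?_
      exact Function.update_of_ne (ne_of_mem_erase (hsub hi)) _ _
  · intro s hs u hu h
    rcases mem_powersetCard.1 hs with ⟨hsub, -⟩
    rcases mem_powersetCard.1 hu with ⟨husub, -⟩
    have hjs : j ∉ s := fun hh => (notMem_erase j univ) (hsub hh)
    have hju : j ∉ u := fun hh => (notMem_erase j univ) (husub hh)
    have := congrArg (Finset.erase · j) h
    simpa [Finset.erase_insert, hjs, hju] using this
  · rw [disjoint_right]
    intro a ha has
    rcases mem_image.1 ha with ⟨s, hs, rfl⟩
    rcases mem_powersetCard.1 has with ⟨hsub, -⟩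
    exact (notMem_erase j univ) (hsub (mem_insert_self j s))

lemma pd_rho (n : ℕ) (l : Fin n → ℝ) (j : Fin n) (m : ℕ) :
    pd n (rho n (m + 1)) l j = (-1 : ℝ) ^ (m + 1) * Eaux n l (univ.erase j) m := by
  unfold pd
  have heq : (fun t => rho n (m + 1) (Function.update l j t))
      = fun t => (-1 : ℝ) ^ (m + 1) * Eaux n l (univ.erase j) (m + 1)
          + ((-1 : ℝ) ^ (m + 1) * Eaux n l (univ.erase j) m) * t := by
    funext t
    rw [rho, esymm_split]; ring
  rw [heq]
  have h : HasDerivAt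
      (fun t : ℝ => (-1 : ℝ) ^ (m + 1) * Eaux n l (univ.erase j) (m + 1)
        + ((-1 : ℝ) ^ (m + 1) * Eaux n l (univ.erase j) m) * t)
      ((-1 : ℝ) ^ (m + 1) * Eaux n l (univ.erase j) m) (l j) := by
    simpa using ((hasDerivAt_id (l j)).const_mul
      ((-1 : ℝ) ^ (m + 1) * Eaux n l (univ.erase j) m)).const_add
      ((-1 : ℝ) ^ (m + 1) * Eaux n l (univ.erase j) (m + 1))
  exact h.deriv

lemma esymm_succ (n : ℕ) (l : Fin n → ℝ) (j : Fin n) (m : ℕ) :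
    esymmF n (m + 1) l
      = Eaux n l (univ.erase j) (m + 1) + l j * Eaux n l (univ.erase j) m := by
  have := esymm_split n l j m (l j)
  rwa [Function.update_eq_self] at this

lemma altsum (n : ℕ) (l : Fin n → ℝ) (j : Fin n) (r : ℕ) :
    ∑ k ∈ Finset.range (r + 1), rho n k l * (l j) ^ (r - k)
      = (-1 : ℝ) ^ r * Eaux n l (univ.erase j) r := by
  induction r with
  | zero => simp [rho, esymmF, Eaux]
  | succ r ih =>
    rw [Finset.sum_range_succ]
    have h1 : ∀ k ∈ Finset.range (r + 1),
        rho n k l * l j ^ (r + 1 - k) = l j * (rho n k l * l j ^ (r - k)) := by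
      intro k hk
      rw [Finset.mem_range] at hk
      rw [show r + 1 - k = (r - k) + 1 by omega, pow_succ]; ring
    rw [Finset.sum_congr rfl h1, ← Finset.mul_sum, ih]
    have h2 : rho n (r + 1) l = (-1 : ℝ) ^ (r + 1) *
        (Eaux n l (univ.erase j) (r + 1) + l j * Eaux n l (univ.erase j) r) := by
      rw [rho, esymm_succ n l j r]
    rw [h2]
    simp [pow_succ]; ring

theorem killing_tensors_from_L (n : ℕ) (hn : 0 < n) (l : Fin n → ℝ)
    (hl : Function.Injective l)
    (L : Matrix (Fin n) (Fin n) ℝ) (hL : L = Matrix.diagonal l)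
    (K : Fin n → Matrix (Fin n) (Fin n) ℝ)
    (hK : ∀ r, K r = -Matrix.diagonal (fun i => pd n (rho n ((r : ℕ) + 1)) l i)) :
    K ⟨0, hn⟩ = 1 ∧
      ∀ r, K r = ∑ k ∈ Finset.range ((r : ℕ) + 1), rho n k l • L ^ ((r : ℕ) - k) := by
  have main : ∀ r : Fin n,
      K r = ∑ k ∈ Finset.range ((r : ℕ) + 1), rho n k l • L ^ ((r : ℕ) - k) := by
    intro r
    rw [hK, hL]
    ext i i'
    simp only [Matrix.sum_apply, Matrix.smul_apply, Matrix.diagonal_pow,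
      Matrix.neg_apply, Matrix.diagonal_apply, smul_eq_mul]
    by_cases h : i = i'
    · subst h
      simp only [if_pos rfl, if_true, Pi.pow_apply]
      rw [pd_rho, altsum n l i (r : ℕ)]
      ring
    · simp [h]
  refine ⟨?_, main⟩
  rw [main ⟨0, hn⟩]
  simp [rho, esymmF]
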